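/- There exists a constant A > 0 with the following property. For every integer N ≥ 2, every real M ≥ 2, and every family of conductances (c_t)_{t≥1} on the cycle ℤ/Nℤ (i.e. symmetric functions c_t on pairs {x,y} with |x − y| ≤ 1) satisfying 1 ≤ c_t(e) ≤ M for all edges e and t ≥ 1 and t ↦ c_t(e) non-decreasing for each edge e, define P_t(x,y) := c_t(x,y)/∑_z c_t(x,z), K_t := (Id + P_t)/2, and μ_t^x := δ_x K_1···K_t. Then for every η ∈ (0,1), T_mer(η) := max_{x,y} inf{ t ≥ 1 : d_TV(μ_t^x, μ_t^y) ≤ η } ≤ A·M·N²·( log N + log M + log(1/η) ). -/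

import Mathlib

open scoped BigOperators Classical
open Filter

noncomputable section

variable {V : Type*} [Fintype V]

/-- Action of a kernel on measures on a finite set: `(μK)(y) = ∑_x μ(x) K(x,y)`. -/
def actMeasF (K : V → V → ℝ) (μ : V → ℝ) : V → ℝ := fun y => ∑ x, μ x * K x y

/-- The law `μ K_1 ⋯ K_t` of the time-inhomogeneous chain at time `t`. -/
def lawF (K : ℕ → V → V → ℝ) (t : ℕ) (μ : V → ℝ) : V → ℝ :=
  (List.range t).foldl (fun ν i => actMeasF (K (i + 1)) ν) μ

/-- Dirac mass at `x`. -/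
def deltaF (x : V) : V → ℝ := fun y => if y = x then (1 : ℝ) else 0

/-- Total variation distance on a finite set. -/
def dTVF (μ ν : V → ℝ) : ℝ := (1 / 2) * ∑ x, |μ x - ν x|

/-- Separation distance `s(μ,ν) = max_x (1 − μ(x)/ν(x))` on a finite set. -/
def sepF [Nonempty V] (μ ν : V → ℝ) : ℝ := ⨆ x, (1 - μ x / ν x)

end

open Finset

lemma lawF_succ {V : Type*} [Fintype V] (K : ℕ → V → V → ℝ) (t : ℕ) (μ : V → ℝ) :
    lawF K (t+1) μ = actMeasF (K (t+1)) (lawF K t μ) := by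
  unfold lawF
  rw [List.range_succ, List.foldl_append]
  rfl

lemma cycle_w_nonneg {N : ℕ} [NeZero N] {M : ℝ} (w : ZMod N → ZMod N → ℝ)
    (hsupp : ∀ x y, ¬(y = x ∨ y = x + 1 ∨ y = x - 1) → w x y = 0)
    (hbd : ∀ x y, (y = x ∨ y = x + 1 ∨ y = x - 1) → 1 ≤ w x y ∧ w x y ≤ M) :
    ∀ x y, 0 ≤ w x y := by
  intro x y
  by_cases h : (y = x ∨ y = x + 1 ∨ y = x - 1)
  · linarith [(hbd x y h).1]
  · rw [hsupp x y h]

lemma cycle_S_lb {N : ℕ} [NeZero N] (hN : 2 ≤ N) {M : ℝ} (w : ZMod N → ZMod N → ℝ)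
    (hsupp : ∀ x y, ¬(y = x ∨ y = x + 1 ∨ y = x - 1) → w x y = 0)
    (hbd : ∀ x y, (y = x ∨ y = x + 1 ∨ y = x - 1) → 1 ≤ w x y ∧ w x y ≤ M) :
    ∀ x, (2:ℝ) ≤ ∑ z, w x z := by
  haveI : Fact (1 < N) := ⟨hN⟩
  intro x
  have hxx1 : x ≠ x + 1 := fun h => one_ne_zero (left_eq_add.mp h)
  have hsub : ({x, x+1} : Finset (ZMod N)).sum (w x) ≤ ∑ z, w x z :=
    Finset.sum_le_sum_of_subset_of_nonneg (Finset.subset_univ _)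
      (fun i _ _ => cycle_w_nonneg w hsupp hbd x i)
  rw [Finset.sum_pair hxx1] at hsub
  have h1 : 1 ≤ w x x := (hbd x x (Or.inl rfl)).1
  have h2 : 1 ≤ w x (x+1) := (hbd x (x+1) (Or.inr (Or.inl rfl))).1
  linarith

lemma cycle_S_ub {N : ℕ} [NeZero N] {M : ℝ} (hM : 2 ≤ M) (w : ZMod N → ZMod N → ℝ)
    (hsupp : ∀ x y, ¬(y = x ∨ y = x + 1 ∨ y = x - 1) → w x y = 0)
    (hbd : ∀ x y, (y = x ∨ y = x + 1 ∨ y = x - 1) → 1 ≤ w x y ∧ w x y ≤ M) :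
    ∀ x, ∑ z, w x z ≤ 3*M := by
  intro x
  have hMpos : (0:ℝ) < M := lt_of_lt_of_le two_pos hM
  have hrw : ∑ z, w x z = ∑ z ∈ ({x, x+1, x-1} : Finset (ZMod N)), w x z := by
    refine (Finset.sum_subset (Finset.subset_univ _) ?_).symm
    intro z _ hz
    exact hsupp x z (by simpa using hz)
  have hcard : ({x, x+1, x-1} : Finset (ZMod N)).card ≤ 3 := by
    refine le_trans (Finset.card_insert_le _ _) ?_
    have := Finset.card_insert_le (x+1) ({x-1} : Finset (ZMod N))
    simp at this ⊢; omega
  calc ∑ z, w x z = ∑ z ∈ ({x, x+1, x-1} : Finset (ZMod N)), w x z := hrw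
    _ ≤ ∑ z ∈ ({x, x+1, x-1} : Finset (ZMod N)), M :=
        Finset.sum_le_sum (fun z hz => (hbd x z (by simpa using hz)).2)
    _ = (({x, x+1, x-1} : Finset (ZMod N)).card : ℝ) * M := by
        rw [Finset.sum_const, nsmul_eq_mul]
    _ ≤ 3 * M := by
        apply mul_le_mul_of_nonneg_right _ hMpos.le
        exact_mod_cast hcard

lemma cycle_K_row {N : ℕ} [NeZero N] (hN : 2 ≤ N) {M : ℝ} (w : ZMod N → ZMod N → ℝ)
    (hsupp : ∀ x y, ¬(y = x ∨ y = x + 1 ∨ y = x - 1) → w x y = 0)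
    (hbd : ∀ x y, (y = x ∨ y = x + 1 ∨ y = x - 1) → 1 ≤ w x y ∧ w x y ≤ M)
    (K : ZMod N → ZMod N → ℝ)
    (hK : ∀ x y, K x y = ((if x = y then (1:ℝ) else 0) + w x y / ∑ z, w x z) / 2) :
    ∀ x, ∑ y, K x y = 1 := by
  intro x
  have hSpos : (0:ℝ) < ∑ z, w x z := lt_of_lt_of_le two_pos (cycle_S_lb hN w hsupp hbd x)
  have h1 : ∑ y, (if x = y then (1:ℝ) else 0) = 1 := by simp
  have h2 : ∑ y, w x y / ∑ z, w x z = 1 := by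
    rw [← Finset.sum_div]
    exact div_self hSpos.ne'
  calc ∑ y, K x y = ∑ y, ((if x = y then (1:ℝ) else 0) + w x y / ∑ z, w x z) / 2 :=
        Finset.sum_congr rfl (fun y _ => by rw [hK])
    _ = ((∑ y, (if x = y then (1:ℝ) else 0)) + ∑ y, w x y / ∑ z, w x z) / 2 := by
        rw [← Finset.sum_div, Finset.sum_add_distrib]
    _ = 1 := by rw [h1, h2]; norm_num

lemma telescopeZ {N : ℕ} (g : ZMod N → ℝ) (x : ZMod N) : ∀ k : ℕ,
    g (x + (k : ZMod N)) - g x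
      = ∑ i ∈ Finset.range k, (g (x + (i : ZMod N) + 1) - g (x + (i : ZMod N)))
  | 0 => by simp
  | (k+1) => by
      rw [Finset.sum_range_succ, ← telescopeZ g x k]
      have h : x + ((k+1 : ℕ) : ZMod N) = x + (k : ZMod N) + 1 := by push_cast; ring
      rw [h]; ring

lemma pathZ {N : ℕ} [NeZero N] (g : ZMod N → ℝ) (x y : ZMod N) :
    (g y - g x)^2 ≤ (N : ℝ) * ∑ z : ZMod N, (g (z+1) - g z)^2 := by
  have hD : (0:ℝ) ≤ ∑ z : ZMod N, (g (z+1) - g z)^2 := by positivity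
  have hy : y = x + (((y - x).val : ℕ) : ZMod N) := by
    simp [ZMod.natCast_val, ZMod.cast_id]
  set k := (y - x).val with hk
  have hkN : k < N := ZMod.val_lt _
  have h1 : g y - g x = ∑ i ∈ Finset.range k, (g (x + (i : ZMod N) + 1) - g (x + (i : ZMod N))) := by
    rw [hy]; exact telescopeZ g x k
  have h2 : (g y - g x)^2 ≤ (k : ℝ) * ∑ i ∈ Finset.range k,
      (g (x + (i : ZMod N) + 1) - g (x + (i : ZMod N)))^2 := by
    rw [h1]
    have := Finset.sum_mul_sq_le_sq_mul_sq (Finset.range k) (fun _ => (1:ℝ))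
      (fun i => g (x + (i : ZMod N) + 1) - g (x + (i : ZMod N)))
    simpa using this
  have h3 : ∑ i ∈ Finset.range k, (g (x + (i : ZMod N) + 1) - g (x + (i : ZMod N)))^2
      ≤ ∑ z : ZMod N, (g (z+1) - g z)^2 := by
    have hinj : ∀ i ∈ Finset.range k, ∀ j ∈ Finset.range k,
        x + (i : ZMod N) = x + (j : ZMod N) → i = j := by
      intro i hi j hj hij
      have : (i : ZMod N) = (j : ZMod N) := by
        have := add_left_cancel hij; exact this
      calc i = ((i : ZMod N)).val := (ZMod.val_cast_of_lt (lt_trans (Finset.mem_range.mp hi) hkN)).symm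
        _ = ((j : ZMod N)).val := by rw [this]
        _ = j := ZMod.val_cast_of_lt (lt_trans (Finset.mem_range.mp hj) hkN)
    calc ∑ i ∈ Finset.range k, (g (x + (i : ZMod N) + 1) - g (x + (i : ZMod N)))^2
        = ∑ z ∈ (Finset.range k).image (fun i : ℕ => x + (i : ZMod N)), (g (z+1) - g z)^2 :=
          (Finset.sum_image (f := fun z => (g (z+1) - g z)^2) (g := fun i : ℕ => x + (i : ZMod N)) hinj).symm
      _ ≤ ∑ z : ZMod N, (g (z+1) - g z)^2 :=
          Finset.sum_le_sum_of_subset_of_nonneg (Finset.subset_univ _)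
            (fun _ _ _ => by positivity)
  calc (g y - g x)^2 ≤ (k : ℝ) * ∑ i ∈ Finset.range k,
        (g (x + (i : ZMod N) + 1) - g (x + (i : ZMod N)))^2 := h2
    _ ≤ (N : ℝ) * ∑ z : ZMod N, (g (z+1) - g z)^2 := by
        apply mul_le_mul (by exact_mod_cast hkN.le) h3 (by positivity) (by positivity)


lemma step_contract {N : ℕ} [NeZero N] (hN : 2 ≤ N) {M : ℝ} (hM : 2 ≤ M)
    (w : ZMod N → ZMod N → ℝ)
    (hsymm : ∀ x y, w x y = w y x)
    (hsupp : ∀ x y, ¬(y = x ∨ y = x + 1 ∨ y = x - 1) → w x y = 0)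
    (hbd : ∀ x y, (y = x ∨ y = x + 1 ∨ y = x - 1) → 1 ≤ w x y ∧ w x y ≤ M)
    (K : ZMod N → ZMod N → ℝ)
    (hK : ∀ x y, K x y = ((if x = y then (1:ℝ) else 0) + w x y / ∑ z, w x z) / 2)
    (ν : ZMod N → ℝ) (hν : ∑ x, ν x = 0) :
    ∑ y, (∑ x, ν x * K x y)^2 / (∑ z, w y z)
      ≤ (1 - 1/(6*M*(N:ℝ)^2)) * ∑ x, (ν x)^2 / (∑ z, w x z) := by
  haveI : Fact (1 < N) := ⟨hN⟩
  have hMpos : (0:ℝ) < M := lt_of_lt_of_le two_pos hM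
  set S : ZMod N → ℝ := fun x => ∑ z, w x z with hSdef
  have hw0 : ∀ x y, 0 ≤ w x y := by
    intro x y
    by_cases h : (y = x ∨ y = x + 1 ∨ y = x - 1)
    · linarith [(hbd x y h).1]
    · rw [hsupp x y h]
  have hxx1 : ∀ x : ZMod N, x ≠ x + 1 := by
    intro x h
    exact one_ne_zero (left_eq_add.mp h)
  have hS2 : ∀ x, (2:ℝ) ≤ S x := by
    intro x
    have hsub : ({x, x+1} : Finset (ZMod N)).sum (w x) ≤ S x :=
      Finset.sum_le_sum_of_subset_of_nonneg (Finset.subset_univ _) (fun i _ _ => hw0 x i)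
    rw [Finset.sum_pair (hxx1 x)] at hsub
    have h1 : 1 ≤ w x x := (hbd x x (Or.inl rfl)).1
    have h2 : 1 ≤ w x (x+1) := (hbd x (x+1) (Or.inr (Or.inl rfl))).1
    linarith
  have hSpos : ∀ x, (0:ℝ) < S x := fun x => lt_of_lt_of_le two_pos (hS2 x)
  have hSM : ∀ x, S x ≤ 3*M := by
    intro x
    have hrw : S x = ∑ z ∈ ({x, x+1, x-1} : Finset (ZMod N)), w x z := by
      refine (Finset.sum_subset (Finset.subset_univ _) ?_).symm
      intro z _ hz
      exact hsupp x z (by simpa using hz)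
    have hcard : ({x, x+1, x-1} : Finset (ZMod N)).card ≤ 3 := by
      refine le_trans (Finset.card_insert_le _ _) ?_
      have := Finset.card_insert_le (x+1) ({x-1} : Finset (ZMod N))
      simp at this ⊢; omega
    calc S x = ∑ z ∈ ({x, x+1, x-1} : Finset (ZMod N)), w x z := hrw
      _ ≤ ∑ z ∈ ({x, x+1, x-1} : Finset (ZMod N)), M :=
          Finset.sum_le_sum (fun z hz => (hbd x z (by simpa using hz)).2)
      _ = (({x, x+1, x-1} : Finset (ZMod N)).card : ℝ) * M := by
          rw [Finset.sum_const, nsmul_eq_mul]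
      _ ≤ 3 * M := by
          apply mul_le_mul_of_nonneg_right _ hMpos.le
          exact_mod_cast hcard
  -- the density g and its basic identities
  set g : ZMod N → ℝ := fun x => ν x / S x with hgdef
  have hS' : ∀ x, (∑ z, w x z) = S x := fun _ => rfl
  have hνg : ∀ x, ν x = S x * g x := by
    intro x
    have h0 := (hSpos x).ne'
    rw [hgdef, mul_comm (S x) _, div_mul_cancel₀ _ h0]
  have hmean : ∑ x, S x * g x = 0 := by
    rw [Finset.sum_congr rfl (fun x _ => (hνg x).symm)]; exact hν
  -- reversibility
  have hrev : ∀ x y, S x * K x y = S y * K y x := by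
    intro x y
    rw [hK, hK]
    by_cases h : x = y
    · subst h; rfl
    · rw [if_neg h, if_neg (Ne.symm h)]
      have hx := (hSpos x).ne'
      have hy := (hSpos y).ne'
      have e1 : S x * ((0 + w x y / S x) / 2) = w x y / 2 := by field_simp; ring
      have e2 : S y * ((0 + w y x / S y) / 2) = w y x / 2 := by field_simp; ring
      rw [e1, e2, hsymm]
  -- the function-level action Kg
  set Kg : ZMod N → ℝ := fun y => ∑ x, K y x * g x with hKgdef
  have hact : ∀ y, (∑ x, ν x * K x y) = S y * Kg y := by
    intro y
    have : ∀ x, ν x * K x y = (S y * K y x) * g x := by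
      intro x; rw [hνg x, ← hrev x y]; ring
    rw [Finset.sum_congr rfl (fun x _ => this x), hKgdef]
    rw [Finset.mul_sum]
    exact Finset.sum_congr rfl (fun x _ => by ring)
  -- rewrite both sides as weighted square sums
  have hLHS : ∑ y, (∑ x, ν x * K x y)^2 / S y = ∑ y, S y * (Kg y)^2 := by
    refine Finset.sum_congr rfl (fun y _ => ?_)
    rw [hact y]
    have := (hSpos y).ne'
    field_simp
  have hRHS : ∑ x, (ν x)^2 / S x = ∑ x, S x * (g x)^2 := by
    refine Finset.sum_congr rfl (fun x _ => ?_)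
    rw [hνg x]
    have := (hSpos x).ne'
    field_simp
  rw [hLHS, hRHS]
  set B : ℝ := ∑ x, S x * (g x)^2 with hBdef
  -- unnormalized P-action
  set T : ZMod N → ℝ := fun y => ∑ x, w y x * g x with hTdef
  have hKgT : ∀ y, Kg y = (g y + T y / S y) / 2 := by
    intro y
    have h1 : ∀ x, K y x * g x = ((if y = x then g x else 0) + (w y x * g x) / S y) / 2 := by
      intro x; rw [hK, hS' y]
      by_cases h : y = x
      · rw [if_pos h, if_pos h]
        have h0 := (hSpos y).ne'
        field_simp
      · rw [if_neg h, if_neg h]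
        have h0 := (hSpos y).ne'
        field_simp
        ring
    rw [hKgdef]
    calc (∑ x, K y x * g x)
        = ∑ x, ((if y = x then g x else 0) + (w y x * g x) / S y) / 2 :=
          Finset.sum_congr rfl (fun x _ => h1 x)
      _ = ((∑ x, if y = x then g x else 0) + (∑ x, w y x * g x) / S y) / 2 := by
          rw [← Finset.sum_div, Finset.sum_add_distrib, Finset.sum_div]
      _ = (g y + T y / S y) / 2 := by rw [Finset.sum_ite_eq _ y g]; (try simp); rfl
  -- row sums of w in both variables
  have hrowT : ∀ x, ∑ y, w y x = S x := by
    intro x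
    rw [Finset.sum_congr rfl (fun y _ => hsymm y x)]
  -- Jensen: contraction of the P-part
  have hJensen : ∑ y, (T y)^2 / S y ≤ B := by
    have hpt : ∀ y, (T y)^2 / S y ≤ ∑ x, w y x * (g x)^2 := by
      intro y
      rw [div_le_iff₀ (hSpos y)]
      have hCS := Finset.sum_mul_sq_le_sq_mul_sq Finset.univ
        (fun x => Real.sqrt (w y x)) (fun x => Real.sqrt (w y x) * g x)
      have e1 : ∀ x, Real.sqrt (w y x) * (Real.sqrt (w y x) * g x) = w y x * g x := by
        intro x; rw [← mul_assoc, Real.mul_self_sqrt (hw0 y x)]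
      have e2 : ∀ x, Real.sqrt (w y x) ^ 2 = w y x := fun x => Real.sq_sqrt (hw0 y x)
      have e3 : ∀ x, (Real.sqrt (w y x) * g x) ^ 2 = w y x * (g x)^2 := by
        intro x; rw [mul_pow, e2 x]
      rw [Finset.sum_congr rfl (fun x _ => e1 x), Finset.sum_congr rfl (fun x _ => e2 x),
        Finset.sum_congr rfl (fun x _ => e3 x)] at hCS
      calc (T y)^2 = (∑ x, w y x * g x)^2 := by rw [hTdef]
        _ ≤ (∑ x, w y x) * ∑ x, w y x * (g x)^2 := hCS
        _ = (∑ x, w y x * (g x)^2) * S y := mul_comm _ _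
    calc ∑ y, (T y)^2 / S y ≤ ∑ y, ∑ x, w y x * (g x)^2 :=
          Finset.sum_le_sum (fun y _ => hpt y)
      _ = ∑ x, ∑ y, w y x * (g x)^2 := Finset.sum_comm
      _ = B := by
          rw [hBdef]
          refine Finset.sum_congr rfl (fun x _ => ?_)
          rw [← Finset.sum_mul, hrowT x]
  -- the quadratic form Q and Dirichlet form E
  set Q : ℝ := ∑ y, g y * T y with hQdef
  set E : ℝ := ∑ y, ∑ x, w y x * (g y - g x)^2 with hEdef
  have hEQ : E = 2*B - 2*Q := by
    have hpt : ∀ y x, w y x * (g y - g x)^2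
        = w y x * (g y)^2 - 2*(w y x * g x * g y) + w y x * (g x)^2 := by
      intro y x; ring
    have h1 : ∑ y, ∑ x, w y x * (g y)^2 = B := by
      rw [hBdef]
      refine Finset.sum_congr rfl (fun y _ => ?_)
      rw [← Finset.sum_mul]
      try exact (mul_comm _ _)
    have h2 : ∑ y, ∑ x, w y x * g x * g y = Q := by
      rw [hQdef]
      refine Finset.sum_congr rfl (fun y _ => ?_)
      rw [hTdef, Finset.mul_sum]
      exact Finset.sum_congr rfl (fun x _ => by ring)
    have h3 : ∑ y, ∑ x, w y x * (g x)^2 = B := by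
      rw [Finset.sum_comm, hBdef]
      refine Finset.sum_congr rfl (fun x _ => ?_)
      rw [← Finset.sum_mul, hrowT x]
    calc E = ∑ y, ∑ x, (w y x * (g y)^2 - 2*(w y x * g x * g y) + w y x * (g x)^2) := by
          rw [hEdef]
          exact Finset.sum_congr rfl (fun y _ => Finset.sum_congr rfl (fun x _ => hpt y x))
      _ = (∑ y, ∑ x, w y x * (g y)^2) - 2*(∑ y, ∑ x, w y x * g x * g y)
            + (∑ y, ∑ x, w y x * (g x)^2) := by
          simp only [Finset.sum_add_distrib, Finset.sum_sub_distrib, Finset.mul_sum]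
      _ = 2*B - 2*Q := by rw [h1, h2, h3]; ring
  -- contraction bound via E
  have hKgE : ∑ y, S y * (Kg y)^2 ≤ B - E/4 := by
    have hpt : ∀ y, S y * (Kg y)^2
        = (S y * (g y)^2 + 2*(g y * T y) + (T y)^2 / S y) / 4 := by
      intro y
      rw [hKgT y]
      have := (hSpos y).ne'
      field_simp; ring
    have : ∑ y, S y * (Kg y)^2
        = ((∑ y, S y * (g y)^2) + 2*(∑ y, g y * T y) + ∑ y, (T y)^2 / S y) / 4 := by
      rw [Finset.sum_congr rfl (fun y _ => hpt y), ← Finset.sum_div]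
      congr 1
      rw [Finset.sum_add_distrib, Finset.sum_add_distrib, ← Finset.mul_sum]
    rw [this]
    linarith [hJensen, hEQ, hBdef, hQdef]
  -- Poincaré inequality on the cycle
  have hN2 : (2:ℝ) ≤ (N:ℝ) := by exact_mod_cast hN
  have hNpos : (0:ℝ) < (N:ℝ) := by linarith
  set D : ℝ := ∑ z, (g (z+1) - g z)^2 with hDdef
  have hD0 : 0 ≤ D := by
    rw [hDdef]; exact Finset.sum_nonneg (fun z _ => sq_nonneg _)
  have hDE : D ≤ E := by
    rw [hDdef, hEdef]
    have h1 : ∀ y : ZMod N, (g (y+1) - g y)^2 ≤ ∑ x, w y x * (g y - g x)^2 := by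
      intro y
      have h2 : w y (y+1) * (g y - g (y+1))^2 ≤ ∑ x, w y x * (g y - g x)^2 :=
        Finset.single_le_sum (f := fun x => w y x * (g y - g x)^2)
          (fun x _ => mul_nonneg (hw0 y x) (sq_nonneg _)) (Finset.mem_univ (y+1))
      have h4 : 1 ≤ w y (y+1) := (hbd y (y+1) (Or.inr (Or.inl rfl))).1
      nlinarith [sq_nonneg (g y - g (y+1))]
    exact Finset.sum_le_sum (fun y _ => h1 y)
  have hE0 : 0 ≤ E := le_trans hD0 hDE
  set St : ℝ := ∑ x, S x with hStdef
  have hStpos : 0 < St := by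
    rw [hStdef]
    exact Finset.sum_pos (fun x _ => hSpos x) Finset.univ_nonempty
  have hStM : St ≤ 3*M*(N:ℝ) := by
    rw [hStdef]
    calc ∑ x, S x ≤ ∑ x : ZMod N, 3*M := Finset.sum_le_sum (fun x _ => hSM x)
      _ = (N:ℝ) * (3*M) := by
          rw [Finset.sum_const, nsmul_eq_mul]
          congr 1
          simp [ZMod.card]
      _ = 3*M*(N:ℝ) := by ring
  have hpath : ∀ y x : ZMod N, (g y - g x)^2 ≤ (N:ℝ)*D := by
    intro y x; rw [hDdef]; exact pathZ g x y
  have hident : ∑ y, ∑ x, S y * S x * (g y - g x)^2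
      = 2*St*B - 2*((∑ x, S x * g x)*(∑ x, S x * g x)) := by
    have h1 : ∑ y, ∑ x, (S y * (g y)^2) * S x = B * St := by
      calc ∑ y, ∑ x, (S y * (g y)^2) * S x
          = ∑ y, (S y * (g y)^2) * St := Finset.sum_congr rfl (fun y _ => by rw [← Finset.mul_sum])
        _ = B * St := by rw [← Finset.sum_mul]
    have h2 : ∑ y, ∑ x, (S y * g y) * (S x * g x)
        = (∑ x, S x * g x) * (∑ x, S x * g x) := by
      calc ∑ y, ∑ x, (S y * g y) * (S x * g x)
          = ∑ y, (S y * g y) * (∑ x, S x * g x) :=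
            Finset.sum_congr rfl (fun y _ => by rw [← Finset.mul_sum])
        _ = (∑ x, S x * g x) * (∑ x, S x * g x) := by rw [← Finset.sum_mul]
    have h3 : ∑ y, ∑ x, S y * (S x * (g x)^2) = St * B := by
      calc ∑ y, ∑ x, S y * (S x * (g x)^2)
          = ∑ y, S y * B := Finset.sum_congr rfl (fun y _ => by rw [← Finset.mul_sum, ← hBdef])
        _ = St * B := by rw [← Finset.sum_mul]
    calc ∑ y, ∑ x, S y * S x * (g y - g x)^2
        = ∑ y, ∑ x, ((S y * (g y)^2) * S x - 2*((S y * g y) * (S x * g x))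
            + S y * (S x * (g x)^2)) :=
          Finset.sum_congr rfl (fun y _ => Finset.sum_congr rfl (fun x _ => by ring))
      _ = (∑ y, ∑ x, (S y * (g y)^2) * S x) - 2*(∑ y, ∑ x, (S y * g y) * (S x * g x))
            + ∑ y, ∑ x, S y * (S x * (g x)^2) := by
          simp only [Finset.sum_add_distrib, Finset.sum_sub_distrib, ← Finset.mul_sum]
      _ = 2*St*B - 2*((∑ x, S x * g x)*(∑ x, S x * g x)) := by rw [h1, h2, h3]; ring
  have hbound : ∑ y, ∑ x, S y * S x * (g y - g x)^2 ≤ (St*St) * ((N:ℝ)*D) := by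
    have h1 : ∑ y, ∑ x, S y * S x * (g y - g x)^2
        ≤ ∑ y, ∑ x, S y * S x * ((N:ℝ)*D) := by
      refine Finset.sum_le_sum (fun y _ => Finset.sum_le_sum (fun x _ => ?_))
      exact mul_le_mul_of_nonneg_left (hpath y x) (mul_nonneg (hSpos y).le (hSpos x).le)
    have h2 : ∑ y, ∑ x, S y * S x * ((N:ℝ)*D) = (St*St) * ((N:ℝ)*D) := by
      calc ∑ y, ∑ x, S y * S x * ((N:ℝ)*D)
          = ∑ y, (∑ x, S y * S x) * ((N:ℝ)*D) :=
            Finset.sum_congr rfl (fun y _ => by rw [← Finset.sum_mul])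
        _ = (∑ y, ∑ x, S y * S x) * ((N:ℝ)*D) := by rw [← Finset.sum_mul]
        _ = (St*St) * ((N:ℝ)*D) := by rw [← Finset.sum_mul_sum]
    linarith
  have hBND : 2*St*B ≤ (St*St) * ((N:ℝ)*D) := by
    have hm : (∑ x, S x * g x) * (∑ x, S x * g x) = 0 := by rw [hmean]; ring
    rw [hident, hm] at hbound
    linarith
  have hbB : B ≤ St*((N:ℝ)*D)/2 := by
    have h4 : St*(2*B) ≤ St*(St*((N:ℝ)*D)) := by linarith [hBND]
    have h5 := le_of_mul_le_mul_left h4 hStpos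
    linarith
  have hBE : B ≤ (3*M*(N:ℝ)^2/2) * E := by
    have hND : 0 ≤ (N:ℝ)*D := mul_nonneg hNpos.le hD0
    have h1 : St*((N:ℝ)*D) ≤ (3*M*(N:ℝ))*((N:ℝ)*D) :=
      mul_le_mul_of_nonneg_right hStM hND
    have h2 : (3*M*(N:ℝ))*((N:ℝ)*D) ≤ (3*M*(N:ℝ))*((N:ℝ)*E) := by
      have : 0 ≤ 3*M*(N:ℝ) := by positivity
      have hh : (N:ℝ)*D ≤ (N:ℝ)*E := mul_le_mul_of_nonneg_left hDE hNpos.le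
      exact mul_le_mul_of_nonneg_left hh this
    linarith [hbB, h1, h2]
  -- conclude
  have hc : (0:ℝ) < 6*M*(N:ℝ)^2 := by positivity
  have hγ : (1/(6*M*(N:ℝ)^2)) * B ≤ E/4 := by
    have h1 : B ≤ (6*M*(N:ℝ)^2/4)*E := by linarith [hBE]
    have h2 : (1/(6*M*(N:ℝ)^2)) * ((6*M*(N:ℝ)^2/4)*E) = E/4 := by
      field_simp
    calc (1/(6*M*(N:ℝ)^2)) * B ≤ (1/(6*M*(N:ℝ)^2)) * ((6*M*(N:ℝ)^2/4)*E) := by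
          apply mul_le_mul_of_nonneg_left h1 (by positivity)
      _ = E/4 := h2
  linarith [hKgE, hγ]



/-- merging time for time-inhomogeneous lazy walks with non-decreasing
bounded conductances on the cycle `ℤ/Nℤ`: there is a universal constant `A > 0` such
that `T_mer(η) ≤ A M N² (log N + log M + log(1/η))`. -/
theorem stmt16 :
    ∃ A : ℝ, 0 < A ∧
      ∀ (N : ℕ) [NeZero N], 2 ≤ N →
      ∀ M : ℝ, 2 ≤ M →
      ∀ c : ℕ → ZMod N → ZMod N → ℝ,
      (∀ t x y, c t x y = c t y x) →
      (∀ t x y, ¬(y = x ∨ y = x + 1 ∨ y = x - 1) → c t x y = 0) →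
      (∀ t, 1 ≤ t → ∀ x y : ZMod N,
        (y = x ∨ y = x + 1 ∨ y = x - 1) → 1 ≤ c t x y ∧ c t x y ≤ M) →
      (∀ t, 1 ≤ t → ∀ x y, c t x y ≤ c (t + 1) x y) →
      ∀ P : ℕ → ZMod N → ZMod N → ℝ,
        (∀ t x y, P t x y = c t x y / ∑ z, c t x z) →
      ∀ K : ℕ → ZMod N → ZMod N → ℝ,
        (∀ t x y, K t x y = ((if x = y then (1 : ℝ) else 0) + P t x y) / 2) →
      ∀ η : ℝ, 0 < η → η < 1 →
      ∀ x y : ZMod N,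
        ((sInf {t : ℕ | 1 ≤ t ∧
            dTVF (lawF K t (deltaF x)) (lawF K t (deltaF y)) ≤ η} : ℕ) : ℝ) ≤
          A * M * (N : ℝ) ^ 2 * (Real.log N + Real.log M + Real.log (1 / η)) := by
  refine ⟨100, by norm_num, ?_⟩
  intro N instN hN M hM c hsym hsupp hbd hmono P hP K hK η hη0 hη1 x y
  haveI : Fact (1 < N) := ⟨hN⟩
  have hMpos : (0:ℝ) < M := lt_of_lt_of_le two_pos hM
  have hNR : (2:ℝ) ≤ (N:ℝ) := by exact_mod_cast hN
  have hNpos : (0:ℝ) < (N:ℝ) := by linarith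
  -- basic kernel facts at each time step t ≥ 1
  have hKc : ∀ t x0 y0, K t x0 y0
      = ((if x0 = y0 then (1:ℝ) else 0) + c t x0 y0 / ∑ z, c t x0 z) / 2 := by
    intro t x0 y0; rw [hK, hP]
  have hbd' : ∀ t : ℕ, (∀ x0 y0 : ZMod N,
      (y0 = x0 ∨ y0 = x0 + 1 ∨ y0 = x0 - 1) → 1 ≤ c (t+1) x0 y0 ∧ c (t+1) x0 y0 ≤ M) :=
    fun t => hbd (t+1) (Nat.le_add_left 1 t)
  have hSlb : ∀ t : ℕ, ∀ z : ZMod N, (2:ℝ) ≤ ∑ u, c (t+1) z u :=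
    fun t => cycle_S_lb hN (c (t+1)) (hsupp (t+1)) (hbd' t)
  have hSpos : ∀ t : ℕ, ∀ z : ZMod N, (0:ℝ) < ∑ u, c (t+1) z u :=
    fun t z => lt_of_lt_of_le two_pos (hSlb t z)
  have hSub : ∀ t : ℕ, ∀ z : ZMod N, ∑ u, c (t+1) z u ≤ 3*M :=
    fun t => cycle_S_ub hM (c (t+1)) (hsupp (t+1)) (hbd' t)
  have hSmono : ∀ t : ℕ, ∀ z : ZMod N, ∑ u, c (t+1) z u ≤ ∑ u, c (t+2) z u := by
    intro t z
    exact Finset.sum_le_sum (fun u _ => hmono (t+1) (Nat.le_add_left 1 t) z u)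
  have hKrow : ∀ t : ℕ, ∀ x0 : ZMod N, ∑ y0, K (t+1) x0 y0 = 1 :=
    fun t => cycle_K_row hN (c (t+1)) (hsupp (t+1)) (hbd' t) (K (t+1)) (hKc (t+1))
  -- the difference of the two laws
  set ν : ℕ → ZMod N → ℝ :=
    fun t z => lawF K t (deltaF x) z - lawF K t (deltaF y) z with hνdef
  have hνrec : ∀ t z, ν (t+1) z = ∑ x0, ν t x0 * K (t+1) x0 z := by
    intro t z
    rw [hνdef]
    simp only [lawF_succ K t]
    show actMeasF (K (t+1)) (lawF K t (deltaF x)) z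
        - actMeasF (K (t+1)) (lawF K t (deltaF y)) z = _
    unfold actMeasF
    rw [← Finset.sum_sub_distrib]
    exact Finset.sum_congr rfl (fun x0 _ => by ring)
  have hν0 : ∀ t, ∑ z, ν t z = 0 := by
    intro t
    induction t with
    | zero =>
        show ∑ z, (deltaF x z - deltaF y z) = 0
        rw [Finset.sum_sub_distrib]
        have hone : ∀ w0 : ZMod N, ∑ z, deltaF w0 z = 1 := by
          intro w0
          rw [Finset.sum_eq_single w0]
          · simp [deltaF]
          · intro b _ hb; simp [deltaF, hb]
          · intro h; exact absurd (Finset.mem_univ w0) h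
        rw [hone x, hone y]; ring
    | succ t ih =>
        calc ∑ z, ν (t+1) z = ∑ z, ∑ x0, ν t x0 * K (t+1) x0 z :=
              Finset.sum_congr rfl (fun z _ => hνrec t z)
          _ = ∑ x0, ∑ z, ν t x0 * K (t+1) x0 z := Finset.sum_comm
          _ = ∑ x0, ν t x0 := by
              refine Finset.sum_congr rfl (fun x0 _ => ?_)
              rw [← Finset.mul_sum, hKrow t x0, mul_one]
          _ = 0 := ih
  -- the weighted chi-square functional
  set F : ℕ → ℝ := fun t => ∑ z, (ν t z)^2 / ∑ u, c (t+1) z u with hFdef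
  set γ : ℝ := 1/(6*M*(N:ℝ)^2) with hγdef
  have hMN2 : (8:ℝ) ≤ M*(N:ℝ)^2 := by nlinarith
  have hγpos : 0 < γ := by rw [hγdef]; positivity
  have hγle : γ ≤ 1 := by
    rw [hγdef]
    rw [div_le_one (by positivity)]
    nlinarith
  have hγ1 : 0 ≤ 1 - γ := by linarith

  have hF0 : F 0 ≤ 1 := by
    have hd : ∀ z, ν 0 z = deltaF x z - deltaF y z := fun z => rfl
    have hpt : ∀ z : ZMod N, (ν 0 z)^2 / (∑ u, c 1 z u)
        ≤ (deltaF x z + deltaF y z) / (∑ u, c 1 z u) := by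
      intro z
      apply (div_le_div_iff_of_pos_right (hSpos 0 z)).mpr
      rw [hd z]
      unfold deltaF
      split_ifs <;> norm_num
    have h1 : ∀ w0 : ZMod N, ∑ z, (deltaF w0 z) / (∑ u, c 1 z u) = 1/(∑ u, c 1 w0 u) := by
      intro w0
      rw [Finset.sum_eq_single w0]
      · simp [deltaF]
      · intro b _ hb; simp [deltaF, hb]
      · intro h; exact absurd (Finset.mem_univ w0) h
    have h2 : ∀ w0 : ZMod N, (1:ℝ)/(∑ u, c 1 w0 u) ≤ 1/2 :=
      fun w0 => one_div_le_one_div_of_le two_pos (hSlb 0 w0)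
    have hF0eq : F 0 = ∑ z, (ν 0 z)^2 / (∑ u, c 1 z u) := rfl
    rw [hF0eq]
    calc ∑ z, (ν 0 z)^2 / (∑ u, c 1 z u)
        ≤ ∑ z, (deltaF x z + deltaF y z) / (∑ u, c 1 z u) :=
          Finset.sum_le_sum (fun z _ => hpt z)
      _ = (∑ z, (deltaF x z)/(∑ u, c 1 z u)) + ∑ z, (deltaF y z)/(∑ u, c 1 z u) := by
          rw [← Finset.sum_add_distrib]
          exact Finset.sum_congr rfl (fun z _ => by rw [add_div])
      _ = 1/(∑ u, c 1 x u) + 1/(∑ u, c 1 y u) := by rw [h1 x, h1 y]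
      _ ≤ 1 := by linarith [h2 x, h2 y]
  -- main contraction induction
  have hkey : ∀ t, F t ≤ (1-γ)^t := by
    intro t
    induction t with
    | zero => simpa using hF0
    | succ t ih =>
        have hstep1 : F (t+1) ≤ ∑ z, (ν (t+1) z)^2 / ∑ u, c (t+1) z u := by
          refine Finset.sum_le_sum (fun z _ => ?_)
          exact div_le_div_of_nonneg_left (sq_nonneg _) (hSpos t z) (hSmono t z)
        have hstep2 : ∑ z, (ν (t+1) z)^2 / (∑ u, c (t+1) z u) ≤ (1-γ) * F t := by
          have hsc := step_contract hN hM (c (t+1)) (fun a b => hsym (t+1) a b)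
            (hsupp (t+1)) (hbd' t) (K (t+1)) (hKc (t+1)) (fun z => ν t z) (hν0 t)
          rw [hγdef]
          calc ∑ z, (ν (t+1) z)^2 / (∑ u, c (t+1) z u)
              = ∑ z, (∑ x0, ν t x0 * K (t+1) x0 z)^2 / (∑ u, c (t+1) z u) :=
                Finset.sum_congr rfl (fun z _ => by rw [hνrec t z])
            _ ≤ _ := hsc
        calc F (t+1) ≤ (1-γ) * F t := le_trans hstep1 hstep2
          _ ≤ (1-γ) * (1-γ)^t := mul_le_mul_of_nonneg_left ih hγ1
          _ = (1-γ)^(t+1) := by rw [pow_succ]; ring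
  -- choice of the time horizon
  set Φ : ℝ := Real.log N + Real.log M + 2*Real.log (1/η) + 1 with hΦdef
  have hlogN : 0 < Real.log N := Real.log_pos (by linarith)
  have hlogM : 0 < Real.log M := Real.log_pos (by linarith)
  have hlogη : 0 < Real.log (1/η) := Real.log_pos (one_lt_one_div hη0 hη1)
  have hΦpos : 0 < Φ := by rw [hΦdef]; linarith
  set R : ℝ := 6*M*(N:ℝ)^2*Φ with hRdef
  have h6pos : (0:ℝ) < 6*M*(N:ℝ)^2 := by positivity
  have hRpos : 0 < R := mul_pos h6pos hΦpos
  set T : ℕ := ⌈R⌉₊ with hTdef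
  have hT1 : 1 ≤ T := Nat.ceil_pos.mpr hRpos
  have hTR : R ≤ (T:ℝ) := Nat.le_ceil R
  -- Cauchy-Schwarz at time T
  have hST : ∀ z, (0:ℝ) < ∑ u, c (T+1) z u := hSpos T
  have hCS : (∑ z, |ν T z|)^2 ≤ (∑ z, ∑ u, c (T+1) z u) * F T := by
    have hcs := Finset.sum_mul_sq_le_sq_mul_sq Finset.univ
      (fun z : ZMod N => Real.sqrt (∑ u, c (T+1) z u))
      (fun z : ZMod N => |ν T z| / Real.sqrt (∑ u, c (T+1) z u))
    have e1 : ∀ z, Real.sqrt (∑ u, c (T+1) z u)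
        * (|ν T z| / Real.sqrt (∑ u, c (T+1) z u)) = |ν T z| := by
      intro z
      rw [mul_div_cancel₀ _ (Real.sqrt_ne_zero'.mpr (hST z))]
    have e2 : ∀ z, (Real.sqrt (∑ u, c (T+1) z u))^2 = ∑ u, c (T+1) z u :=
      fun z => Real.sq_sqrt (hST z).le
    have e3 : ∀ z, (|ν T z| / Real.sqrt (∑ u, c (T+1) z u))^2
        = (ν T z)^2 / ∑ u, c (T+1) z u := by
      intro z
      rw [div_pow, sq_abs, e2 z]
    rw [Finset.sum_congr rfl (fun z _ => e1 z), Finset.sum_congr rfl (fun z _ => e2 z),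
      Finset.sum_congr rfl (fun z _ => e3 z)] at hcs
    exact hcs
  have hSsum : (∑ z, ∑ u, c (T+1) z u) ≤ 3*M*(N:ℝ) := by
    calc (∑ z, ∑ u, c (T+1) z u) ≤ ∑ _z : ZMod N, 3*M :=
          Finset.sum_le_sum (fun z _ => hSub T z)
      _ = (N:ℝ)*(3*M) := by
          rw [Finset.sum_const, nsmul_eq_mul]
          congr 1
          simp [ZMod.card]
      _ = 3*M*(N:ℝ) := by ring
  have hF0' : 0 ≤ F T := by
    have : F T = ∑ z, (ν T z)^2 / ∑ u, c (T+1) z u := rfl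
    rw [this]
    exact Finset.sum_nonneg (fun z _ => div_nonneg (sq_nonneg _) (hSpos T z).le)
  -- exponential decay
  have hpow : (1-γ)^T ≤ Real.exp (-(γ*(T:ℝ))) := by
    have h1 : 1 - γ ≤ Real.exp (-γ) := by linarith [Real.add_one_le_exp (-γ)]
    calc (1-γ)^T ≤ (Real.exp (-γ))^T := pow_le_pow_left₀ hγ1 h1 T
      _ = Real.exp ((T:ℝ) * (-γ)) := (Real.exp_nat_mul (-γ) T).symm
      _ = Real.exp (-(γ*(T:ℝ))) := by ring_nf
  have hγR : γ*R = Φ := by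
    rw [hγdef, hRdef]
    field_simp
  have hmono2 : Real.exp (-(γ*(T:ℝ))) ≤ Real.exp (-Φ) := by
    apply Real.exp_le_exp.mpr
    rw [← hγR]
    have := mul_le_mul_of_nonneg_left hTR hγpos.le
    linarith
  have hexpΦ : Real.exp Φ = (N:ℝ)*M*(1/η)^2*Real.exp 1 := by
    rw [hΦdef]
    rw [Real.exp_add, Real.exp_add, Real.exp_add, Real.exp_log hNpos, Real.exp_log hMpos]
    have h2 : (2:ℝ)*Real.log (1/η) = Real.log ((1/η)^2) := by
      rw [Real.log_pow]
      push_cast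
      ring
    rw [h2, Real.exp_log (by positivity)]
  have hefin : (3*M*(N:ℝ)) * Real.exp (-Φ) ≤ 4*η^2 := by
    have h2e : (2:ℝ) ≤ Real.exp 1 := by linarith [Real.add_one_le_exp 1]
    rw [Real.exp_neg, hexpΦ]
    rw [mul_inv_le_iff₀ (by positivity)]
    have hid : 4*η^2*((N:ℝ)*M*(1/η)^2*Real.exp 1) = 4*(N:ℝ)*M*Real.exp 1 := by
      field_simp
    rw [hid]
    nlinarith
  -- the TV distance at time T is at most η
  have habs : (∑ z, |ν T z|)^2 ≤ (2*η)^2 := by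
    have h1 : (∑ z, |ν T z|)^2 ≤ 3*M*(N:ℝ) * F T :=
      le_trans hCS (mul_le_mul_of_nonneg_right hSsum hF0')
    have h2 : 3*M*(N:ℝ) * F T ≤ 3*M*(N:ℝ) * Real.exp (-Φ) := by
      apply mul_le_mul_of_nonneg_left _ (by positivity)
      exact le_trans (hkey T) (le_trans hpow hmono2)
    calc (∑ z, |ν T z|)^2 ≤ 3*M*(N:ℝ) * Real.exp (-Φ) := le_trans h1 h2
      _ ≤ 4*η^2 := hefin
      _ = (2*η)^2 := by ring
  have hsum_abs : ∑ z, |ν T z| ≤ 2*η := by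
    have h0 : (0:ℝ) ≤ ∑ z, |ν T z| := Finset.sum_nonneg (fun z _ => abs_nonneg _)
    have h2 : (0:ℝ) ≤ 2*η := by linarith
    exact (pow_le_pow_iff_left₀ h0 h2 two_ne_zero).mp habs
  have hdTV : dTVF (lawF K T (deltaF x)) (lawF K T (deltaF y)) ≤ η := by
    have hν' : ∀ z, lawF K T (deltaF x) z - lawF K T (deltaF y) z = ν T z :=
      fun z => by rw [hνdef]
    unfold dTVF
    rw [Finset.sum_congr rfl (fun z _ => by rw [hν' z])]
    linarith
  -- conclude
  have hmem : T ∈ {t : ℕ | 1 ≤ t ∧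
      dTVF (lawF K t (deltaF x)) (lawF K t (deltaF y)) ≤ η} := ⟨hT1, hdTV⟩
  have hsinf : sInf {t : ℕ | 1 ≤ t ∧
      dTVF (lawF K t (deltaF x)) (lawF K t (deltaF y)) ≤ η} ≤ T := Nat.sInf_le hmem
  have hTcast : (T:ℝ) ≤ R + 1 := le_of_lt (Nat.ceil_lt_add_one hRpos.le)
  have hfinal : R + 1 ≤ 100 * M * (N:ℝ)^2 * (Real.log N + Real.log M + Real.log (1/η)) := by
    rw [hRdef, hΦdef]
    have hl2 : (0.69:ℝ) ≤ Real.log 2 := by linarith [Real.log_two_gt_d9]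
    have ha : (0.69:ℝ) ≤ Real.log N := le_trans hl2 (Real.log_le_log two_pos hNR)
    have hb : (0.69:ℝ) ≤ Real.log M := le_trans hl2 (Real.log_le_log two_pos hM)
    have hu0 : (0:ℝ) ≤ M*(N:ℝ)^2 := by positivity
    have hua : (M*(N:ℝ)^2)*(0.69:ℝ) ≤ (M*(N:ℝ)^2)*Real.log N :=
      mul_le_mul_of_nonneg_left ha hu0
    have hub : (M*(N:ℝ)^2)*(0.69:ℝ) ≤ (M*(N:ℝ)^2)*Real.log M :=
      mul_le_mul_of_nonneg_left hb hu0
    have huc : (0:ℝ) ≤ (M*(N:ℝ)^2)*Real.log (1/η) := mul_nonneg hu0 hlogη.le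
    linarith [hMN2, hua, hub, huc]
  calc ((sInf {t : ℕ | 1 ≤ t ∧
        dTVF (lawF K t (deltaF x)) (lawF K t (deltaF y)) ≤ η} : ℕ) : ℝ)
      ≤ (T:ℝ) := Nat.cast_le.mpr hsinf
    _ ≤ R + 1 := hTcast
    _ ≤ 100 * M * (N:ℝ)^2 * (Real.log N + Real.log M + Real.log (1/η)) := hfinal
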